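/- Let n ≥ 1 and c ∈ ℤ^n with c ≥ 0. Define λ_i := c_1 + c_2 + ⋯ + c_{n−i+1} for i = 1,…,n and λ_{n+1} := 0. Then the map sending each feasible function f ∈ F(c) to the triangular array (x_{ij})_{1 ≤ j ≤ i ≤ n} given by x_{ij} := (Σ_{v ∈ V_i(j)} f(v)) + c_1 + ⋯ + c_{i−j} (the sum c_1 + ⋯ + c_{i−j} being 0 when i = j) is a bijection from F(c) onto the set of Gelfand–Tsetlin patterns for λ. -/

import Mathlib

open scoped Classical

namespace CrystalA

/-- A node `(i, k, j)` of the (extended) supporting graph stands for `v_i^k(j)`. -/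
abbrev Node : Type := ℕ × ℕ × ℕ

/-- Membership in the supporting graph `G`:
`1 ≤ j ≤ i ≤ n` and `i - j + 1 ≤ k ≤ n - j + 1`. -/
def IsNode (n : ℕ) (v : Node) : Prop :=
  1 ≤ v.2.2 ∧ v.2.2 ≤ v.1 ∧ v.1 ≤ n ∧ v.1 + 1 ≤ v.2.1 + v.2.2 ∧ v.2.1 + v.2.2 ≤ n + 1

/-- Membership in the extended graph `Ḡ`: `0 ≤ j ≤ n`, `j ≤ i ≤ n + 1`, `1 ≤ k ≤ n`. -/
def IsExtNode (n : ℕ) (v : Node) : Prop :=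
  v.2.2 ≤ n ∧ v.2.2 ≤ v.1 ∧ v.1 ≤ n + 1 ∧ 1 ≤ v.2.1 ∧ v.2.1 ≤ n

/-- Ascending step `v_i^k(j) → v_{i-1}^k(j)`. -/
def Asc (u w : Node) : Prop := u.2.1 = w.2.1 ∧ u.2.2 = w.2.2 ∧ u.1 = w.1 + 1

/-- Descending step `v_i^k(j) → v_{i+1}^k(j+1)`. -/
def Desc (u w : Node) : Prop := u.2.1 = w.2.1 ∧ w.2.2 = u.2.2 + 1 ∧ w.1 = u.1 + 1

/-- Edges of the supporting graph `G`. -/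
def GEdge (n : ℕ) (u w : Node) : Prop := IsNode n u ∧ IsNode n w ∧ (Asc u w ∨ Desc u w)

/-- Edges of the extended graph `Ḡ`. -/
def ExtEdge (n : ℕ) (u w : Node) : Prop := IsExtNode n u ∧ IsExtNode n w ∧ (Asc u w ∨ Desc u w)

/-- The extension of `f : V(G) → ℤ` to `Ḡ`: on an extra node it takes value `c_k`
if there is a directed path in `Ḡ^k` from it to a node of `G^k`, and `0` otherwise. -/
noncomputable def ext (n : ℕ) (c : ℕ → ℤ) (f : Node → ℤ) (v : Node) : ℤ :=
  if IsNode n v then f v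
  else if ∃ w, IsNode n w ∧ Relation.ReflTransGen (ExtEdge n) v w then c v.2.1 else 0

/-- Increment `∂f` of (the extension of) `f` on the edge `(u, w)`. -/
noncomputable def dP (n : ℕ) (c : ℕ → ℤ) (f : Node → ℤ) (u w : Node) : ℤ :=
  ext n c f u - ext n c f w

/-- Head of the SE-edge of `v = v_i^k(j)`, namely `v_{i+1}^k(j+1)`. -/
def seNode (v : Node) : Node := (v.1 + 1, v.2.1, v.2.2 + 1)

/-- Tail of the SW-edge of `v = v_i^k(j)`, namely `v_{i+1}^k(j)`. -/
def swNode (v : Node) : Node := (v.1 + 1, v.2.1, v.2.2)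

/-- Tail of the NW-edge of `v = v_i^k(j)`, namely `v_{i-1}^k(j-1)`. -/
def nwNode (v : Node) : Node := (v.1 - 1, v.2.1, v.2.2 - 1)

/-- The SE-edge of `v` is tight for `f`. -/
def SEtight (n : ℕ) (c : ℕ → ℤ) (f : Node → ℤ) (v : Node) : Prop :=
  dP n c f v (seNode v) = 0

/-- The SW-edge of `v` is tight for `f`. -/
def SWtight (n : ℕ) (c : ℕ → ℤ) (f : Node → ℤ) (v : Node) : Prop :=
  dP n c f (swNode v) v = 0

/-- The node `v_i^k(j)` has the switch property in the multinode `V_i(j)`: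
SE-edges of preceding nodes are tight and SW-edges of succeeding nodes are tight. -/
def SwitchAt (n : ℕ) (c : ℕ → ℤ) (f : Node → ℤ) (i j k : ℕ) : Prop :=
  (∀ k', i + 1 ≤ k' + j → k' < k → SEtight n c f (i, k', j)) ∧
  (∀ k', k < k' → k' + j ≤ n + 1 → SWtight n c f (i, k', j))

/-- Feasible functions of the crossing model (normalized to vanish off `G`). -/
def Feasible (n : ℕ) (c : ℕ → ℤ) (f : Node → ℤ) : Prop :=
  (∀ u w, GEdge n u w → 0 ≤ f u - f w) ∧
  (∀ v, IsNode n v → 0 ≤ f v ∧ f v ≤ c v.2.1) ∧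
  (∀ i j, 1 ≤ j → j ≤ i → i ≤ n → ∃ k, i + 1 ≤ k + j ∧ k + j ≤ n + 1 ∧ SwitchAt n c f i j k) ∧
  (∀ v, ¬ IsNode n v → f v = 0)

/-- `v_i^k(j)` is the switch-node of the multinode `V_i(j)`: the first node
with the switch property. -/
def IsSwitchNode (n : ℕ) (c : ℕ → ℤ) (f : Node → ℤ) (i j k : ℕ) : Prop :=
  i + 1 ≤ k + j ∧ k + j ≤ n + 1 ∧ SwitchAt n c f i j k ∧
  ∀ k', i + 1 ≤ k' + j → SwitchAt n c f i j k' → k ≤ k'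

/-- The slack `ε(v)` at a node `v = v_i^k(j)`. -/
noncomputable def slack (n : ℕ) (c : ℕ → ℤ) (f : Node → ℤ) (v : Node) : ℤ :=
  dP n c f (nwNode v) v - dP n c f (v.1, v.2.1, v.2.2 - 1) (v.1 + 1, v.2.1, v.2.2)

/-- The total slack `ε_i(j)` at the multinode `V_i(j)`. -/
noncomputable def epsSum (n : ℕ) (c : ℕ → ℤ) (f : Node → ℤ) (i j : ℕ) : ℤ :=
  ∑ k ∈ Finset.Icc (i + 1 - j) (n + 1 - j), slack n c f (i, k, j)

/-- `ε_i(p, j) = ε_i(p) + ⋯ + ε_i(j)`. -/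
noncomputable def epsInt (n : ℕ) (c : ℕ → ℤ) (f : Node → ℤ) (i p j : ℕ) : ℤ :=
  ∑ q ∈ Finset.Icc p j, epsSum n c f i q

/-- The reduced slack `ε̃_i(j)`. -/
noncomputable def redSlack (n : ℕ) (c : ℕ → ℤ) (f : Node → ℤ) (i j : ℕ) : ℤ :=
  if h : (Finset.Icc 1 j).Nonempty
  then max 0 ((Finset.Icc 1 j).inf' h fun p => epsInt n c f i p j)
  else 0

/-- `V_i(j)` is the active multinode for `f` and color `i`. -/
def Active (n : ℕ) (c : ℕ → ℤ) (f : Node → ℤ) (i j : ℕ) : Prop :=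
  1 ≤ j ∧ j ≤ i ∧ 0 < redSlack n c f i j ∧ ∀ q, j < q → q ≤ i → redSlack n c f i q = 0

/-- The edge relation of color `i` of the crystal graph `K(c)`:
`g = φ_i(f)` with `f, g` feasible. -/
def Move (n : ℕ) (c : ℕ → ℤ) (i : ℕ) (f g : Node → ℤ) : Prop :=
  Feasible n c f ∧ Feasible n c g ∧ 1 ≤ i ∧ i ≤ n ∧
  ∃ j k, Active n c f i j ∧ IsSwitchNode n c f i j k ∧
    g = Function.update f (i, k, j) (f (i, k, j) + 1)

/-- `SeqRel n c L f g`: applying the operators `F_i` for `i ∈ L` (head first)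
to `f` is defined and yields `g`. -/
def SeqRel (n : ℕ) (c : ℕ → ℤ) : List ℕ → (Node → ℤ) → (Node → ℤ) → Prop
  | [], f, g => f = g
  | i :: L, f, g => ∃ h, Move n c i f h ∧ SeqRel n c L h g

/-- The substring `w_{m,k,j} = F_j F_{j+1} ⋯ F_{j+k-1}` (rightmost applied first),
as a list of colors in order of application. -/
def wList (k j : ℕ) : List ℕ := (List.range k).map fun t => j + k - 1 - t

/-- The operator string `S_{m,k} = w_{m,k,m-k+1} ⋯ w_{m,k,2} w_{m,k,1}`
as a list of colors in order of application. -/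
def sList (m k : ℕ) : List ℕ := ((List.range (m - k + 1)).map fun t => wList k (t + 1)).flatten

/-- The `p`-th power `S_{m,k}^p` as a list of colors in order of application. -/
def sPow (m k p : ℕ) : List ℕ := (List.replicate p (sList m k)).flatten

/-- The composite `S_{m,kmax}^{p kmax} ∘ ⋯ ∘ S_{m,1}^{p 1}` as a list of colors
in order of application. -/
def sPowChain (m : ℕ) (p : ℕ → ℕ) (kmax : ℕ) : List ℕ :=
  ((List.range kmax).map fun t => sPow m (t + 1) (p (t + 1))).flatten

/-- Replacing each operator `F_j` by `F_{j+1}` in a string. -/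
def shiftList (L : List ℕ) : List ℕ := L.map (· + 1)

/-- The string `T_m` obtained from `S_{n-1,m-1}` by replacing each `F_j` by `F_{j+1}`. -/
def tList (n m : ℕ) : List ℕ := shiftList (sList (n - 1) (m - 1))

/-- The composite `T_n^{q n} ∘ ⋯ ∘ T_2^{q 2}` as a list of colors in order of application. -/
def tChain (n : ℕ) (q : ℕ → ℕ) : List ℕ :=
  ((List.range (n - 1)).map fun t => (List.replicate (q (t + 2)) (tList n (t + 2))).flatten).flatten

/-- The principal function `f[a]`, constant `a_k` on `G^k`. -/
noncomputable def principal (n : ℕ) (a : ℕ → ℤ) : Node → ℤ := fun v =>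
  if IsNode n v then a v.2.1 else 0

/-- One (undirected) step in the subgraph of `K(c)` with colors `lo, …, hi`. -/
def ColsStep (n : ℕ) (c : ℕ → ℤ) (lo hi : ℕ) (f g : Node → ℤ) : Prop :=
  ∃ i, lo ≤ i ∧ i ≤ hi ∧ (Move n c i f g ∨ Move n c i g f)

/-- `f` and `g` lie in the same connected component of the subgraph of `K(c)`
formed by all vertices and the edges of colors `lo, …, hi`. -/
def SameComp (n : ℕ) (c : ℕ → ℤ) (lo hi : ℕ) (f g : Node → ℤ) : Prop :=
  Relation.ReflTransGen (ColsStep n c lo hi) f g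

/-- Reachability by directed paths in `K(c)`. -/
def Reach (n : ℕ) (c : ℕ → ℤ) (f g : Node → ℤ) : Prop :=
  Relation.ReflTransGen (fun x y => ∃ i, Move n c i x y) f g

/-- The function `f_{a,Δ}` (with the renaming `x_m(j) = v_{m+j-1}^k(j)`, `m = i - j + 1`). -/
noncomputable def fDelta (n : ℕ) (a Δ : ℕ → ℤ) : Node → ℤ := fun v =>
  if IsNode n v then
    (let k := v.2.1
     let j := v.2.2
     let m := v.1 + 1 - v.2.2
     if m = k then (if j = n - k + 1 then a k else a k + max (Δ k) 0)
     else if j = n - k + 1 then a k + min (Δ (k - 1)) 0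
     else a k + max (Δ k) 0 + min (Δ (k - 1)) 0)
  else 0

/-! ### Crystal axioms -/

/-- `h_i(v)`: the number of edges of the maximal `i`-colored path starting at `v`. -/
noncomputable def headLen {V : Type*} (E : ℕ → V → V → Prop) (i : ℕ) (v : V) : ℕ :=
  sSup {m | ∃ g : ℕ → V, g 0 = v ∧ ∀ l, l < m → E i (g l) (g (l + 1))}

/-- `t_i(v)`: the number of edges of the maximal `i`-colored path ending at `v`. -/
noncomputable def tailLen {V : Type*} (E : ℕ → V → V → Prop) (i : ℕ) (v : V) : ℕ :=
  sSup {m | ∃ g : ℕ → V, g m = v ∧ ∀ l, l < m → E i (g l) (g (l + 1))}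

/-- The label `ℓ_j(e) = h_j(v) - h_j(u)` of an edge `e = (u, v)` w.r.t. color `j`. -/
noncomputable def lab {V : Type*} (E : ℕ → V → V → Prop) (j : ℕ) (u v : V) : ℤ :=
  (headLen E j v : ℤ) - (headLen E j u : ℤ)

/-- Neighboring colors: `|i - j| = 1`. -/
def Nbr (i j : ℕ) : Prop := i = j + 1 ∨ j = i + 1

/-- Distant colors: `|i - j| ≥ 2`. -/
def Dist (i j : ℕ) : Prop := i + 2 ≤ j ∨ j + 2 ≤ i

/-- The (regular) `A_n`-crystal axioms for an `n`-colored digraph with edge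
relations `E i` (`i` the color). -/
structure IsAnCrystal (n : ℕ) {V : Type*} (E : ℕ → V → V → Prop) : Prop where
  colorBound : ∀ i u v, E i u v → 1 ≤ i ∧ i ≤ n
  connected : ∀ u v : V, Relation.ReflTransGen (fun x y => ∃ i, E i x y ∨ E i y x) u v
  outFun : ∀ i u v v', E i u v → E i u v' → v = v'
  inFun : ∀ i u u' v, E i u v → E i u' v → u = u'
  a1 : ∀ i v, ∃ (t h : ℕ) (g : ℕ → V), g t = v ∧ (∀ m, m < t + h → E i (g m) (g (m + 1))) ∧
      (∀ m m', m ≤ t + h → m' ≤ t + h → g m = g m' → m = m') ∧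
      (¬ ∃ u, E i u (g 0)) ∧ (¬ ∃ w, E i (g (t + h)) w)
  a2_tail : ∀ i j u v, E i u v → 1 ≤ j → j ≤ n → j ≠ i → tailLen E j v ≤ tailLen E j u
  a2_head : ∀ i j u v, E i u v → 1 ≤ j → j ≤ n → j ≠ i → headLen E j u ≤ headLen E j v
  a2_diff : ∀ i j u v, E i u v → 1 ≤ j → j ≤ n → j ≠ i →
      ((headLen E j u : ℤ) - (tailLen E j u : ℤ)) - ((headLen E j v : ℤ) - (tailLen E j v : ℤ))
        = if Nbr i j then -1 else 0
  a2_convex : ∀ i j u v w, E i u v → E i v w → 1 ≤ j → j ≤ n → j ≠ i →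
      2 * headLen E j v ≤ headLen E j u + headLen E j w
  a3_fwd : ∀ i j u v v', Nbr i j → E i u v → E j u v' → lab E j u v = 0 →
      lab E i u v' = 1 ∧ ∃ w, E i v' w ∧ E j v w
  a3_bwd : ∀ i j u u' v, Nbr i j → E i u v → E j u' v → lab E j u v = 1 →
      lab E i u' v = 0 ∧ ∃ w, E i w u' ∧ E j w u
  a4_fwd : ∀ i j u v v', Nbr i j → E i u v → E j u v' → lab E j u v = 1 → lab E i u v' = 1 →
      ∃ w x2 x3 y2 y3, E j v x2 ∧ E j x2 x3 ∧ E i x3 w ∧ E i v' y2 ∧ E i y2 y3 ∧ E j y3 w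
  a4_bwd : ∀ i j u u' v, Nbr i j → E i u v → E j u' v → lab E j u v = 0 → lab E i u' v = 0 →
      ∃ w x2 x3 y2 y3, E j x2 u ∧ E j x3 x2 ∧ E i w x3 ∧ E i y2 u' ∧ E i y3 y2 ∧ E j w y3
  a5_ff : ∀ i j v x w y w', Dist i j → E j v x → E i x w → E i v y → E j y w' → w = w'
  a5_fb : ∀ i j v x w y w', Dist i j → E j x v → E i x w → E i v y → E j w' y → w = w'
  a5_bb : ∀ i j v x w y w', Dist i j → E j x v → E i w x → E i y v → E j w' y → w = w'


/-- The map sending a feasible function to a triangular array (extended by `0`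
outside the triangle `1 ≤ j ≤ i ≤ n`). -/
noncomputable def gtMap (n : ℕ) (c : ℕ → ℤ) (f : Node → ℤ) : ℕ → ℕ → ℤ := fun i j =>
  if 1 ≤ j ∧ j ≤ i ∧ i ≤ n then
    (∑ k ∈ Finset.Icc (i + 1 - j) (n + 1 - j), f (i, k, j)) + ∑ t ∈ Finset.Icc 1 (i - j), c t
  else 0

/-- Gelfand–Tsetlin patterns for the partition `λ_i = c_1 + ⋯ + c_{n-i+1}`
(triangular arrays, extended by `0` outside the triangle). -/
def IsGT (n : ℕ) (c : ℕ → ℤ) (x : ℕ → ℕ → ℤ) : Prop :=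
  (∀ i j, ¬(1 ≤ j ∧ j ≤ i ∧ i ≤ n) → x i j = 0) ∧
  (∀ i j, 1 ≤ j → j + 1 ≤ i → i ≤ n → x (i - 1) j ≤ x i j) ∧
  (∀ i j, 1 ≤ j → j ≤ i → i + 1 ≤ n → x (i + 1) (j + 1) ≤ x i j) ∧
  (∀ i, 1 ≤ i → i ≤ n →
    x n i ≤ (∑ t ∈ Finset.Icc 1 (n - i + 1), c t) ∧
    (∑ t ∈ Finset.Icc 1 (n - i), c t) ≤ x n i)

/-!
At a multinode `V_i(j)` the conditions defining `F(c)` only involve the level below: as a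
function of `k`, `f(v_i^k(j))` lies between the values of (the extension of) `f` at the SE- and
SW-neighbours, equals the lower one before the switch-node and the upper one after it. Such a
"switch sequence" between `a` and `b` is determined by its sum `S`, since its prefix sums must be
`max (∑ a) (S - ∑ b)`, and one exists for every `S` with `∑ a ≤ S ≤ ∑ b`. Over `V_i(j)` the sums
of the two bounds are, up to the shift `c_1 + ⋯ + c_{i-j}`, the entries `x_{i+1,j+1}` and
`x_{i+1,j}` (read as `λ_{j+1}` and `λ_j` when `i = n`), so these sum conditions are exactly the
interlacing inequalities. Working upwards from level `n` gives injectivity and surjectivity.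
-/

open Finset

lemma forall_of_forall_gt_of_succ {n : ℕ} {P : ℕ → Prop} (top : ∀ i, n < i → P i)
    (step : ∀ i, P (i + 1) → P i) (i : ℕ) : P i := by
  have : ∀ d i, n < i + d → P i := by
    intro d
    induction d with
    | zero => exact top
    | succ d ih => exact fun i hi => step i (ih (i + 1) (by omega))
  exact this (n + 1) i (by omega)

section SwitchSeq

variable {m K p t : ℕ} {a b f g : ℕ → ℤ} {S : ℤ}

lemma sum_Ico_add_sum_Icc {M : Type*} [AddCommMonoid M] (u : ℕ → M) (hmp : m ≤ p)
    (hpK : p ≤ K + 1) :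
    ∑ t ∈ Ico m p, u t + ∑ t ∈ Icc p K, u t = ∑ t ∈ Icc m K, u t := by
  rw [← Ico_add_one_right_eq_Icc, ← Ico_add_one_right_eq_Icc]
  exact sum_Ico_consecutive u hmp hpK

def IsSwitchSeq (m K : ℕ) (a b f : ℕ → ℤ) : Prop :=
  (∀ t ∈ Icc m K, a t ≤ f t ∧ f t ≤ b t) ∧
    ∃ k ∈ Icc m K, (∀ t ∈ Ico m k, f t = a t) ∧ ∀ t ∈ Ioc k K, f t = b t

lemma isSwitchSeq_congr (h : ∀ t ∈ Icc m K, f t = g t) :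
    IsSwitchSeq m K a b f ↔ IsSwitchSeq m K a b g := by
  have hIco : ∀ k ∈ Icc m K, ∀ t ∈ Ico m k, t ∈ Icc m K := fun k hk t ht => by
    simp only [mem_Icc, mem_Ico] at hk ht ⊢; omega
  have hIoc : ∀ k ∈ Icc m K, ∀ t ∈ Ioc k K, t ∈ Icc m K := fun k hk t ht => by
    simp only [mem_Icc, mem_Ioc] at hk ht ⊢; omega
  unfold IsSwitchSeq
  constructor
  · rintro ⟨hab, k, hk, hlo, hhi⟩
    refine ⟨fun t ht => h t ht ▸ hab t ht, k, hk, fun t ht => ?_, fun t ht => ?_⟩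
    · rw [← h t (hIco k hk t ht), hlo t ht]
    · rw [← h t (hIoc k hk t ht), hhi t ht]
  · rintro ⟨hab, k, hk, hlo, hhi⟩
    refine ⟨fun t ht => (h t ht).symm ▸ hab t ht, k, hk, fun t ht => ?_, fun t ht => ?_⟩
    · rw [h t (hIco k hk t ht), hlo t ht]
    · rw [h t (hIoc k hk t ht), hhi t ht]

def switchPrefix (m K : ℕ) (a b : ℕ → ℤ) (S : ℤ) (p : ℕ) : ℤ :=
  max (∑ t ∈ Ico m p, a t) (S - ∑ t ∈ Icc p K, b t)

def switchSeq (m K : ℕ) (a b : ℕ → ℤ) (S : ℤ) (t : ℕ) : ℤ :=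
  switchPrefix m K a b S (t + 1) - switchPrefix m K a b S t

-- Up to the switch the prefix follows `a` and the rest is at most `∑ b`; from there on the
-- suffix follows `b` and the prefix is at least `∑ a`.
lemma IsSwitchSeq.sum_Ico_eq (hf : IsSwitchSeq m K a b f) (hmp : m ≤ p) (hpK : p ≤ K + 1) :
    ∑ t ∈ Ico m p, f t = switchPrefix m K a b (∑ t ∈ Icc m K, f t) p := by
  obtain ⟨hab, k, hk, hlo, hhi⟩ := hf
  rw [mem_Icc] at hk
  have hsplit := sum_Ico_add_sum_Icc f hmp hpK
  unfold switchPrefix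
  rcases le_or_gt p k with hpk | hkp
  · have hpre : ∑ t ∈ Ico m p, f t = ∑ t ∈ Ico m p, a t :=
      sum_congr rfl fun t ht => hlo t (by simp only [mem_Ico] at ht ⊢; omega)
    have hsuf : ∑ t ∈ Icc p K, f t ≤ ∑ t ∈ Icc p K, b t :=
      sum_le_sum fun t ht => (hab t (by simp only [mem_Icc] at ht ⊢; omega)).2
    omega
  · have hsuf : ∑ t ∈ Icc p K, f t = ∑ t ∈ Icc p K, b t :=
      sum_congr rfl fun t ht => hhi t (by simp only [mem_Icc, mem_Ioc] at ht ⊢; omega)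
    have hpre : ∑ t ∈ Ico m p, a t ≤ ∑ t ∈ Ico m p, f t :=
      sum_le_sum fun t ht => (hab t (by simp only [mem_Icc, mem_Ico] at ht ⊢; omega)).1
    omega

lemma IsSwitchSeq.eq_switchSeq (hf : IsSwitchSeq m K a b f) (ht : t ∈ Icc m K) :
    f t = switchSeq m K a b (∑ t ∈ Icc m K, f t) t := by
  rw [mem_Icc] at ht
  rw [switchSeq, ← hf.sum_Ico_eq ht.1 (by omega), ← hf.sum_Ico_eq (by omega) (by omega),
    sum_Ico_succ_top ht.1]
  ring

lemma IsSwitchSeq.eq_of_sum_eq (hf : IsSwitchSeq m K a b f) (hg : IsSwitchSeq m K a b g)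
    (hsum : ∑ t ∈ Icc m K, f t = ∑ t ∈ Icc m K, g t) : ∀ t ∈ Icc m K, f t = g t := fun t ht => by
  rw [hf.eq_switchSeq ht, hg.eq_switchSeq ht, hsum]

lemma switchSeq_mem (hab : a t ≤ b t) (ht : t ∈ Icc m K) :
    a t ≤ switchSeq m K a b S t ∧ switchSeq m K a b S t ≤ b t := by
  rw [mem_Icc] at ht
  unfold switchSeq switchPrefix
  rw [sum_Ico_succ_top ht.1, ← add_sum_Ioc_eq_sum_Icc ht.2, ← Icc_add_one_left_eq_Ioc]
  omega

lemma sum_switchSeq (hmK : m ≤ K) (hS : ∑ t ∈ Icc m K, a t ≤ S) (hS' : S ≤ ∑ t ∈ Icc m K, b t) :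
    ∑ t ∈ Icc m K, switchSeq m K a b S t = S := by
  unfold switchSeq
  rw [sum_Icc_sub hmK, switchPrefix, switchPrefix, Ico_add_one_right_eq_Icc, Ico_self,
    Icc_eq_empty_of_lt (Nat.lt_succ_self K), sum_empty, sum_empty]
  omega

-- `∑ t ∈ Ico m p, a t + ∑ t ∈ Icc p K, b t` decreases in `p`; the switch sits where it
-- first drops to `S`.
lemma exists_switch_switchSeq (hab : ∀ t ∈ Icc m K, a t ≤ b t) (hmK : m ≤ K)
    (hS : ∑ t ∈ Icc m K, a t ≤ S) :
    ∃ k ∈ Icc m K, (∀ t ∈ Ico m k, switchSeq m K a b S t = a t) ∧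
      ∀ t ∈ Ioc k K, switchSeq m K a b S t = b t := by
  set Q : ℕ → Prop := fun p => ∑ t ∈ Ico m p, a t + ∑ t ∈ Icc p K, b t ≤ S
  have hanti : ∀ p q, m ≤ p → p ≤ q → q ≤ K + 1 → Q p → Q q := by
    intro p q hmp hpq hqK hp
    have h1 := sum_Ico_consecutive a hmp hpq
    have h2 := sum_Ico_add_sum_Icc b hpq hqK
    have h3 : ∑ t ∈ Ico p q, a t ≤ ∑ t ∈ Ico p q, b t :=
      sum_le_sum fun t ht => hab t (by simp only [mem_Icc, mem_Ico] at ht ⊢; omega)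
    simp only [Q] at hp ⊢
    omega
  have hend : m ≤ K + 1 ∧ Q (K + 1) := ⟨by omega, by
    simp only [Q, Ico_add_one_right_eq_Icc, Icc_eq_empty_of_lt (Nat.lt_succ_self K), sum_empty]
    omega⟩
  have hex : ∃ p, m ≤ p ∧ Q p := ⟨K + 1, hend⟩
  set q := Nat.find hex
  obtain ⟨hmq, hq⟩ : m ≤ q ∧ Q q := Nat.find_spec hex
  have hqK : q ≤ K + 1 := Nat.find_min' hex hend
  have hbefore : ∀ p, m ≤ p → p < q → switchPrefix m K a b S p = ∑ t ∈ Ico m p, a t :=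
    fun p hmp hpq => by
      have := Nat.find_min hex hpq
      simp only [Q, not_and, not_le] at this
      have := this hmp
      unfold switchPrefix; omega
  have hafter : ∀ p, q ≤ p → p ≤ K + 1 → switchPrefix m K a b S p = S - ∑ t ∈ Icc p K, b t :=
    fun p hqp hpK => by
      have := hanti q p hmq hqp hpK hq
      simp only [Q] at this
      unfold switchPrefix; omega
  refine ⟨max m (q - 1), by simp only [mem_Icc]; omega, fun t ht => ?_, fun t ht => ?_⟩
  · simp only [mem_Ico] at ht
    rw [switchSeq, hbefore t ht.1 (by omega), hbefore (t + 1) (by omega) (by omega),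
      sum_Ico_succ_top ht.1]
    ring
  · simp only [mem_Ioc] at ht
    rw [switchSeq, hafter t (by omega) (by omega), hafter (t + 1) (by omega) (by omega),
      ← add_sum_Ioc_eq_sum_Icc ht.2, ← Icc_add_one_left_eq_Ioc]
    ring

lemma isSwitchSeq_switchSeq (hab : ∀ t ∈ Icc m K, a t ≤ b t) (hmK : m ≤ K)
    (hS : ∑ t ∈ Icc m K, a t ≤ S) : IsSwitchSeq m K a b (switchSeq m K a b S) :=
  ⟨fun t ht => switchSeq_mem (hab t ht) ht, exists_switch_switchSeq hab hmK hS⟩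

end SwitchSeq

section Multinode

variable {n : ℕ} {c : ℕ → ℤ} {f g : Node → ℤ} {i j k : ℕ}

lemma isNode_iff : IsNode n (i, k, j) ↔ 1 ≤ j ∧ j ≤ i ∧ i ≤ n ∧ i + 1 ≤ k + j ∧ k + j ≤ n + 1 :=
  Iff.rfl

lemma isNode_iff_mem_Icc :
    IsNode n (i, k, j) ↔ (1 ≤ j ∧ j ≤ i ∧ i ≤ n) ∧ k ∈ Icc (i + 1 - j) (n + 1 - j) := by
  rw [isNode_iff, mem_Icc]
  omega

def seVal (n : ℕ) (f : Node → ℤ) (i k j : ℕ) : ℤ :=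
  if k + j ≤ n then f (i + 1, k, j + 1) else 0

def swVal (c : ℕ → ℤ) (f : Node → ℤ) (i k j : ℕ) : ℤ :=
  if i + 2 ≤ k + j then f (i + 1, k, j) else c k

lemma seVal_congr (h : ∀ k j, f (i + 1, k, j) = g (i + 1, k, j)) : seVal n f i = seVal n g i := by
  funext k j
  simp only [seVal, h]

lemma swVal_congr (h : ∀ k j, f (i + 1, k, j) = g (i + 1, k, j)) :
    swVal c f i = swVal c g i := by
  funext k j
  simp only [swVal, h]

lemma ext_of_isNode {v : Node} (hv : IsNode n v) : ext n c f v = f v := if_pos hv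

lemma ext_seNode (hv : IsNode n (i, k, j)) : ext n c f (seNode (i, k, j)) = seVal n f i k j := by
  rw [isNode_iff] at hv
  simp only [seNode, seVal]
  split_ifs with h
  · exact ext_of_isNode (isNode_iff.mpr (by omega))
  · rw [ext, if_neg (by rw [isNode_iff]; omega), if_neg]
    rintro ⟨w, hw, hpath⟩
    -- paths in `Ḡ` keep `k` and never decrease `k + j`
    have hmono : ∀ u, Relation.ReflTransGen (ExtEdge n) (i + 1, k, j + 1) u →
        u.2.1 = k ∧ n + 2 ≤ u.2.1 + u.2.2 := by
      intro u hu
      induction hu with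
      | refl => exact ⟨rfl, show n + 2 ≤ k + (j + 1) by omega⟩
      | tail _ hstep ih =>
        obtain ⟨-, -, ⟨h1, h2, -⟩ | ⟨h1, h2, -⟩⟩ := hstep <;> omega
    have := hmono w hpath
    have := hw.2.2.2.2
    omega

lemma ext_swNode (hv : IsNode n (i, k, j)) :
    ext n c f (swNode (i, k, j)) = swVal c f i k j := by
  rw [isNode_iff] at hv
  simp only [swNode, swVal]
  split_ifs with h
  · exact ext_of_isNode (isNode_iff.mpr (by omega))
  · rw [ext, if_neg (by rw [isNode_iff]; omega), if_pos]
    refine ⟨(i, k, j), isNode_iff.mpr hv, .single ⟨?_, ?_, .inl ⟨rfl, rfl, rfl⟩⟩⟩ <;>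
      simp only [IsExtNode] <;> omega

lemma seTight_iff (hv : IsNode n (i, k, j)) :
    SEtight n c f (i, k, j) ↔ f (i, k, j) = seVal n f i k j := by
  rw [SEtight, dP, ext_seNode hv, ext_of_isNode hv, sub_eq_zero]

lemma swTight_iff (hv : IsNode n (i, k, j)) :
    SWtight n c f (i, k, j) ↔ f (i, k, j) = swVal c f i k j := by
  rw [SWtight, dP, ext_swNode hv, ext_of_isNode hv, sub_eq_zero, eq_comm]

/-- The conditions of `F(c)` at the multinode `V_i(j)`: a switch sequence in `k` between the
values at the SE- and SW-neighbours. -/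
def LocallyFeasibleAt (n : ℕ) (c : ℕ → ℤ) (f : Node → ℤ) (i j : ℕ) : Prop :=
  IsSwitchSeq (i + 1 - j) (n + 1 - j) (seVal n f i · j) (swVal c f i · j) (fun k => f (i, k, j))

lemma locallyFeasibleAt_congr (h : ∀ k j, f (i, k, j) = g (i, k, j))
    (h' : ∀ k j, f (i + 1, k, j) = g (i + 1, k, j)) :
    LocallyFeasibleAt n c f i j ↔ LocallyFeasibleAt n c g i j := by
  simp only [LocallyFeasibleAt, seVal_congr h', swVal_congr h', h]

lemma LocallyFeasibleAt.bounds (h : LocallyFeasibleAt n c f i j) (hv : IsNode n (i, k, j)) :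
    seVal n f i k j ≤ f (i, k, j) ∧ f (i, k, j) ≤ swVal c f i k j :=
  h.1 k (isNode_iff_mem_Icc.mp hv).2

def LocallyFeasible (n : ℕ) (c : ℕ → ℤ) (f : Node → ℤ) : Prop :=
  ∀ i j, 1 ≤ j → j ≤ i → i ≤ n → LocallyFeasibleAt n c f i j

lemma Feasible.locallyFeasible (hf : Feasible n c f) : LocallyFeasible n c f := by
  intro i j hj hji hi
  obtain ⟨hedge, hbound, hswitch, -⟩ := hf
  refine ⟨fun k hk => ?_, ?_⟩
  · have hv : IsNode n (i, k, j) := isNode_iff_mem_Icc.mpr ⟨⟨hj, hji, hi⟩, hk⟩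
    rw [isNode_iff] at hv
    simp only [seVal, swVal]
    constructor
    · split_ifs with h
      · have := hedge (i, k, j) (i + 1, k, j + 1)
          ⟨isNode_iff.mpr hv, isNode_iff.mpr (by omega), .inr ⟨rfl, rfl, rfl⟩⟩
        omega
      · exact (hbound _ (isNode_iff.mpr hv)).1
    · split_ifs with h
      · have := hedge (i + 1, k, j) (i, k, j)
          ⟨isNode_iff.mpr (by omega), isNode_iff.mpr hv, .inl ⟨rfl, rfl, rfl⟩⟩
        omega
      · exact (hbound _ (isNode_iff.mpr hv)).2
  · obtain ⟨k, hk1, hk2, hse, hsw⟩ := hswitch i j hj hji hi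
    refine ⟨k, by rw [mem_Icc]; omega, fun t ht => ?_, fun t ht => ?_⟩
    · rw [mem_Ico] at ht
      exact (seTight_iff (isNode_iff.mpr (by omega))).mp (hse t (by omega) ht.2)
    · rw [mem_Ioc] at ht
      exact (swTight_iff (isNode_iff.mpr (by omega))).mp (hsw t ht.1 (by omega))

lemma LocallyFeasible.bounds (hloc : LocallyFeasible n c f) (hv : IsNode n (i, k, j)) :
    seVal n f i k j ≤ f (i, k, j) ∧ f (i, k, j) ≤ swVal c f i k j :=
  (hloc i j hv.1 hv.2.1 hv.2.2.1).bounds hv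

lemma LocallyFeasible.nonneg_and_le (hloc : LocallyFeasible n c f) :
    ∀ i k j, IsNode n (i, k, j) → 0 ≤ f (i, k, j) ∧ f (i, k, j) ≤ c k := by
  refine forall_of_forall_gt_of_succ (n := n) (fun i hi k j hv => absurd hv.2.2.1 (by omega)) ?_
  intro i ih k j hv
  have hb := hloc.bounds hv
  rw [isNode_iff] at hv
  simp only [seVal, swVal] at hb
  split_ifs at hb with hse hsw hsw
  · have := (ih k (j + 1) (isNode_iff.mpr (by omega))).1
    have := (ih k j (isNode_iff.mpr (by omega))).2
    omega
  · have := (ih k (j + 1) (isNode_iff.mpr (by omega))).1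
    omega
  · have := (ih k j (isNode_iff.mpr (by omega))).2
    omega
  · omega

lemma LocallyFeasible.feasible (hloc : LocallyFeasible n c f)
    (hzero : ∀ v, ¬ IsNode n v → f v = 0) : Feasible n c f := by
  refine ⟨?_, fun ⟨i, k, j⟩ hv => hloc.nonneg_and_le i k j hv, fun i j hj hji hi => ?_, hzero⟩
  · rintro ⟨i, k, j⟩ ⟨i', k', j'⟩ ⟨hu, hw, ⟨hk, hj, hi⟩ | ⟨hk, hj, hi⟩⟩ <;>
      simp only at hk hj hi <;> subst hk hj hi <;> rw [isNode_iff] at hu hw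
    · have := (hloc.bounds (isNode_iff.mpr hw)).2
      rw [swVal, if_pos (by omega)] at this
      omega
    · have := (hloc.bounds (isNode_iff.mpr hu)).1
      rw [seVal, if_pos (by omega)] at this
      omega
  · obtain ⟨k, hk, hlo, hhi⟩ := (hloc i j hj hji hi).2
    rw [Finset.mem_Icc] at hk
    refine ⟨k, by omega, by omega, fun t h1 h2 => ?_, fun t h1 h2 => ?_⟩
    · exact (seTight_iff (isNode_iff.mpr (by omega))).mpr (hlo t (by rw [mem_Ico]; omega))
    · exact (swTight_iff (isNode_iff.mpr (by omega))).mpr (hhi t (by rw [mem_Ioc]; omega))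

end Multinode

section Pattern

variable {n : ℕ} {c : ℕ → ℤ} {f g : Node → ℤ} {x y : ℕ → ℕ → ℤ} {i j k : ℕ}

-- The pattern with the row `λ_j = c_1 + ⋯ + c_{n+1-j}` appended as row `n + 1`.
def patternExt (n : ℕ) (c : ℕ → ℤ) (x : ℕ → ℕ → ℤ) (i j : ℕ) : ℤ :=
  if i ≤ n then x i j else ∑ t ∈ Icc 1 (n + 1 - j), c t

lemma patternExt_congr (h : ∀ j, 1 ≤ j → j ≤ i → i ≤ n → x i j = y i j) (hj : 1 ≤ j)
    (hji : j ≤ i) : patternExt n c x i j = patternExt n c y i j := by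
  unfold patternExt
  split_ifs with hi
  exacts [h j hj hji hi, rfl]

lemma isGT_iff : IsGT n c x ↔ (∀ i j, ¬(1 ≤ j ∧ j ≤ i ∧ i ≤ n) → x i j = 0) ∧
    ∀ i j, 1 ≤ j → j ≤ i → i ≤ n →
      patternExt n c x (i + 1) (j + 1) ≤ x i j ∧ x i j ≤ patternExt n c x (i + 1) j := by
  simp only [IsGT, patternExt, Nat.add_sub_add_right]
  constructor
  · rintro ⟨hzero, hup, hdown, hrow⟩
    refine ⟨hzero, fun i j hj hji hi => ?_⟩
    rcases hi.lt_or_eq with hi | rfl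
    · rw [if_pos (show i + 1 ≤ n from hi), if_pos (show i + 1 ≤ n from hi)]
      exact ⟨hdown i j hj hji hi, by simpa using hup (i + 1) j hj (by omega) hi⟩
    · rw [if_neg (by omega), if_neg (by omega), show i + 1 - j = i - j + 1 by omega]
      exact (hrow j hj hji).symm
  · rintro ⟨hzero, hbd⟩
    refine ⟨hzero, fun i j hj hji hi => ?_, fun i j hj hji hi => ?_, fun j hj hjn => ?_⟩
    · have := (hbd (i - 1) j hj (by omega) (by omega)).2
      rwa [Nat.sub_add_cancel (by omega), if_pos hi] at this
    · exact (if_pos hi ▸ hbd i j hj hji (by omega)).1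
    · have := hbd n j hj hjn le_rfl
      rwa [if_neg (by omega), if_neg (by omega), show n + 1 - j = n - j + 1 by omega,
        and_comm] at this

lemma IsGT.c_nonneg (hx : IsGT n c x) (hk : 1 ≤ k) (hkn : k ≤ n) : 0 ≤ c k := by
  have := hx.2.2.2 (n + 1 - k) (by omega) (by omega)
  rw [show n - (n + 1 - k) = k - 1 by omega, sum_Icc_succ_top (by omega),
    Nat.sub_add_cancel hk] at this
  omega

lemma gtMap_of_le (hj : 1 ≤ j) (hji : j ≤ i) (hi : i ≤ n) :
    gtMap n c f i j = ∑ k ∈ Icc (i + 1 - j) (n + 1 - j), f (i, k, j) + ∑ t ∈ Icc 1 (i - j), c t :=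
  if_pos ⟨hj, hji, hi⟩

lemma gtMap_congr (h : ∀ k j, f (i, k, j) = g (i, k, j)) : gtMap n c f i = gtMap n c g i := by
  funext j
  simp only [gtMap, h]

lemma sum_seVal_add (hj : 1 ≤ j) (hji : j ≤ i) (hi : i ≤ n) :
    ∑ k ∈ Icc (i + 1 - j) (n + 1 - j), seVal n f i k j + ∑ t ∈ Icc 1 (i - j), c t =
      patternExt n c (gtMap n c f) (i + 1) (j + 1) := by
  rw [patternExt]
  split_ifs with h
  · rw [gtMap_of_le (by omega) (by omega) h, show n + 1 - j = n - j + 1 by omega,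
      sum_Icc_succ_top (by omega), seVal, if_neg (by omega), add_zero]
    simp only [Nat.add_sub_add_right]
    congr 1
    exact sum_congr rfl fun k hk => if_pos (by rw [mem_Icc] at hk; omega)
  · obtain rfl : i = n := by omega
    rw [Icc_self, sum_singleton, seVal, if_neg (by omega), zero_add, Nat.add_sub_add_right]

lemma sum_swVal_add (hj : 1 ≤ j) (hji : j ≤ i) (hi : i ≤ n) :
    ∑ k ∈ Icc (i + 1 - j) (n + 1 - j), swVal c f i k j + ∑ t ∈ Icc 1 (i - j), c t =
      patternExt n c (gtMap n c f) (i + 1) j := by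
  rw [patternExt]
  split_ifs with h
  · have hsw : ∀ k ∈ Icc (i + 1 + 1 - j) (n + 1 - j), swVal c f i k j = f (i + 1, k, j) :=
      fun k hk => if_pos (by rw [mem_Icc] at hk; omega)
    rw [gtMap_of_le hj (by omega) h, ← add_sum_Ioc_eq_sum_Icc (by omega),
      ← Icc_add_one_left_eq_Ioc, show i + 1 - j + 1 = i + 1 + 1 - j by omega,
      show i + 1 - j = i - j + 1 by omega, sum_Icc_succ_top (by omega : 1 ≤ i - j + 1),
      swVal, if_neg (by omega), sum_congr rfl hsw]
    ring
  · obtain rfl : i = n := by omega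
    rw [Icc_self, sum_singleton, swVal, if_neg (by omega), show i + 1 - j = i - j + 1 by omega,
      sum_Icc_succ_top (by omega)]
    ring

theorem Feasible.isGT_gtMap (hf : Feasible n c f) : IsGT n c (gtMap n c f) := by
  refine isGT_iff.mpr ⟨fun i j h => if_neg h, fun i j hj hji hi => ?_⟩
  have hloc := hf.locallyFeasible i j hj hji hi
  rw [← sum_seVal_add hj hji hi, ← sum_swVal_add hj hji hi, gtMap_of_le hj hji hi]
  constructor <;> gcongr with k hk
  exacts [(hloc.1 k hk).1, (hloc.1 k hk).2]

theorem Feasible.eq_of_gtMap_eq (hf : Feasible n c f) (hg : Feasible n c g)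
    (h : gtMap n c f = gtMap n c g) : f = g := by
  have hoff : ∀ v, ¬ IsNode n v → f v = g v := fun v hv => by rw [hf.2.2.2 v hv, hg.2.2.2 v hv]
  have hlevel : ∀ i k j, f (i, k, j) = g (i, k, j) := by
    refine forall_of_forall_gt_of_succ (n := n) (fun i hi k j => hoff _ fun hv => ?_) ?_
    · exact absurd hv.2.2.1 (by simp only; omega)
    intro i hsucc k j
    by_cases hv : IsNode n (i, k, j)
    · obtain ⟨⟨hj, hji, hi⟩, hk⟩ := isNode_iff_mem_Icc.mp hv
      have hgloc := hg.locallyFeasible i j hj hji hi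
      rw [LocallyFeasibleAt, ← seVal_congr hsucc, ← swVal_congr hsucc] at hgloc
      refine (hf.locallyFeasible i j hj hji hi).eq_of_sum_eq hgloc ?_ k hk
      have := congr_fun₂ h i j
      rwa [gtMap_of_le hj hji hi, gtMap_of_le hj hji hi, add_left_inj] at this
    · exact hoff _ hv
  funext ⟨i, k, j⟩
  exact hlevel i k j

end Pattern

section Inverse

variable {n : ℕ} {c : ℕ → ℤ} {f : Node → ℤ} {x : ℕ → ℕ → ℤ} {i j k : ℕ}

lemma seVal_le_swVal (hc : ∀ k, 1 ≤ k → k ≤ n → 0 ≤ c k)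
    (hloc : ∀ j, 1 ≤ j → j ≤ i + 1 → i + 1 ≤ n → LocallyFeasibleAt n c f (i + 1) j)
    (hv : IsNode n (i, k, j)) : seVal n f i k j ≤ swVal c f i k j := by
  have hb : ∀ {j}, IsNode n (i + 1, k, j) →
      seVal n f (i + 1) k j ≤ f (i + 1, k, j) ∧ f (i + 1, k, j) ≤ swVal c f (i + 1) k j :=
    fun hw => (hloc _ hw.1 hw.2.1 hw.2.2.1).bounds hw
  rw [isNode_iff] at hv
  simp only [seVal, swVal]
  split_ifs with hse hsw
  · -- the diamond `f (i+1,k,j+1) ≤ f (i+2,k,j+1) ≤ f (i+1,k,j)` at level `i + 1`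
    have hupper := (hb (j := j + 1) (isNode_iff.mpr (by omega))).2
    have hlower := (hb (j := j) (isNode_iff.mpr (by omega))).1
    rw [swVal, if_pos (by omega)] at hupper
    rw [seVal, if_pos (by omega)] at hlower
    omega
  · have hupper := (hb (j := j + 1) (isNode_iff.mpr (by omega))).2
    rwa [swVal, if_neg (by omega)] at hupper
  · have hlower := (hb (j := j) (isNode_iff.mpr (by omega))).1
    rwa [seVal, if_neg (by omega)] at hlower
  · exact hc k (by omega) (by omega)

noncomputable def fillLevel (n : ℕ) (c : ℕ → ℤ) (x : ℕ → ℕ → ℤ) (f : Node → ℤ) (i : ℕ) :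
    Node → ℤ := fun v =>
  if v.1 = i ∧ IsNode n v then
    switchSeq (i + 1 - v.2.2) (n + 1 - v.2.2) (seVal n f i · v.2.2) (swVal c f i · v.2.2)
      (x i v.2.2 - ∑ t ∈ Icc 1 (i - v.2.2), c t) v.2.1
  else f v

lemma fillLevel_of_ne {i' : ℕ} (h : i' ≠ i) : fillLevel n c x f i (i', k, j) = f (i', k, j) :=
  if_neg fun h' => h h'.1

lemma fillLevel_of_not_isNode {v : Node} (hv : ¬ IsNode n v) : fillLevel n c x f i v = f v :=
  if_neg fun h' => hv h'.2

lemma fillLevel_self (hv : IsNode n (i, k, j)) :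
    fillLevel n c x f i (i, k, j) = switchSeq (i + 1 - j) (n + 1 - j) (seVal n f i · j)
      (swVal c f i · j) (x i j - ∑ t ∈ Icc 1 (i - j), c t) k :=
  if_pos ⟨rfl, hv⟩

lemma fillLevel_spec (hx : IsGT n c x)
    (hf : ∀ i' j, i + 1 ≤ i' → 1 ≤ j → j ≤ i' → i' ≤ n →
      LocallyFeasibleAt n c f i' j ∧ gtMap n c f i' j = x i' j)
    (hj : 1 ≤ j) (hji : j ≤ i) (hi : i ≤ n) :
    LocallyFeasibleAt n c (fillLevel n c x f i) i j ∧
      gtMap n c (fillLevel n c x f i) i j = x i j := by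
  have hsucc : ∀ k j, fillLevel n c x f i (i + 1, k, j) = f (i + 1, k, j) :=
    fun k j => fillLevel_of_ne (by omega)
  have hfill : ∀ k ∈ Icc (i + 1 - j) (n + 1 - j), fillLevel n c x f i (i, k, j) =
      switchSeq (i + 1 - j) (n + 1 - j) (seVal n f i · j) (swVal c f i · j)
        (x i j - ∑ t ∈ Icc 1 (i - j), c t) k :=
    fun k hk => fillLevel_self (isNode_iff_mem_Icc.mpr ⟨⟨hj, hji, hi⟩, hk⟩)
  have hrow : ∀ j, 1 ≤ j → j ≤ i + 1 → i + 1 ≤ n → gtMap n c f (i + 1) j = x (i + 1) j :=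
    fun j hj hji hi => (hf (i + 1) j le_rfl hj hji hi).2
  have hse := sum_seVal_add (c := c) (f := f) hj hji hi
  have hsw := sum_swVal_add (c := c) (f := f) hj hji hi
  rw [patternExt_congr hrow (by omega) (by omega)] at hse
  rw [patternExt_congr hrow hj (by omega)] at hsw
  have hxij := (isGT_iff.mp hx).2 i j hj hji hi
  constructor
  · rw [LocallyFeasibleAt, seVal_congr hsucc, swVal_congr hsucc, isSwitchSeq_congr hfill]
    refine isSwitchSeq_switchSeq (fun k hk => ?_) (by omega) (by linarith)
    exact seVal_le_swVal (fun k => hx.c_nonneg)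
      (fun j hj hji hi => (hf (i + 1) j le_rfl hj hji hi).1)
      (isNode_iff_mem_Icc.mpr ⟨⟨hj, hji, hi⟩, hk⟩)
  · rw [gtMap_of_le hj hji hi, sum_congr rfl hfill,
      sum_switchSeq (by omega) (by linarith) (by linarith)]
    ring

theorem exists_feasible_gtMap_eq (hx : IsGT n c x) : ∃ f, Feasible n c f ∧ gtMap n c f = x := by
  have hlevels : ∀ i, ∃ f : Node → ℤ, (∀ v, ¬ IsNode n v → f v = 0) ∧
      ∀ i' j, i ≤ i' → 1 ≤ j → j ≤ i' → i' ≤ n →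
        LocallyFeasibleAt n c f i' j ∧ gtMap n c f i' j = x i' j := by
    refine forall_of_forall_gt_of_succ (n := n)
      (fun i hi => ⟨0, fun _ _ => rfl, fun i' j hi' _ _ hi'n => absurd hi'n (by omega)⟩) ?_
    rintro i ⟨f, hzero, hf⟩
    refine ⟨fillLevel n c x f i, fun v hv => (fillLevel_of_not_isNode hv).trans (hzero v hv),
      fun i' j hi' hj hji hi'n => ?_⟩
    rcases hi'.lt_or_eq with hlt | rfl
    · have hsame : ∀ l, i < l → ∀ k j, fillLevel n c x f i (l, k, j) = f (l, k, j) :=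
        fun l hl k j => fillLevel_of_ne (by omega)
      rw [locallyFeasibleAt_congr (hsame i' hlt) (hsame (i' + 1) (by omega)),
        gtMap_congr (hsame i' hlt)]
      exact hf i' j hlt hj hji hi'n
    · exact fillLevel_spec hx hf hj hji hi'n
  obtain ⟨f, hzero, hf⟩ := hlevels 0
  refine ⟨f, LocallyFeasible.feasible (fun i j hj hji hi => (hf i j i.zero_le hj hji hi).1) hzero,
    ?_⟩
  funext i j
  by_cases h : 1 ≤ j ∧ j ≤ i ∧ i ≤ n
  · exact (hf i j (Nat.zero_le i) h.1 h.2.1 h.2.2).2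
  · rw [gtMap, if_neg h, (isGT_iff.mp hx).1 i j h]

end Inverse

theorem statement14_general (n : ℕ) (c : ℕ → ℤ) :
    Set.BijOn (gtMap n c) {f | Feasible n c f} {x | IsGT n c x} :=
  ⟨fun _ hf => hf.isGT_gtMap, fun _ hf _ hg h => hf.eq_of_gtMap_eq hg h,
    fun _ hx => exists_feasible_gtMap_eq hx⟩

/-- Remark 1. The map `f ↦ (x_{ij})`,
`x_{ij} = Σ_{v ∈ V_i(j)} f(v) + c_1 + ⋯ + c_{i-j}`, is a bijection from `F(c)` onto
the set of Gelfand–Tsetlin patterns for `λ`. -/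
theorem statement14 (n : ℕ) (hn : 1 ≤ n) (c : ℕ → ℤ)
    (hc : ∀ k, 1 ≤ k → k ≤ n → 0 ≤ c k) :
    Set.BijOn (gtMap n c) {f | Feasible n c f} {x | IsGT n c x} :=
  statement14_general n c

end CrystalA
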